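/- If A² = 4α²q² and λ = 2(p-1)|A|^{p-2}α²(2q²-1), then k(s) := A·cn_p(αs + β, q) satisfies the Euler–Lagrange equation p(|k|^{p-2}k)'' + (p-1)|k|^p k − λk = 0 pointwise. -/

import Mathlib

open Real MeasureTheory Set intervalIntegral Filter

noncomputable section

/-- Incomplete p-elliptic integral of the first kind, type 1. -/
def F1 (p q x : ℝ) : ℝ :=
  ∫ θ in (0:ℝ)..x, |Real.cos θ| ^ (1 - 2/p) / Real.sqrt (1 - q^2 * Real.sin θ ^ 2)

/-- Complete p-elliptic integral of the first kind, type 1. -/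
def K1 (p q : ℝ) : ℝ := F1 p q (π/2)

/-- Incomplete p-elliptic integral of the second kind, type 1. -/
def E1 (p q x : ℝ) : ℝ :=
  ∫ θ in (0:ℝ)..x, Real.sqrt (1 - q^2 * Real.sin θ ^ 2) * |Real.cos θ| ^ (1 - 2/p)

/-- Complete p-elliptic integral of the second kind, type 1. -/
def E1c (p q : ℝ) : ℝ := E1 p q (π/2)

/-- Incomplete p-elliptic integral of the first kind, type 2. -/
def F2 (p q x : ℝ) : ℝ :=
  ∫ θ in (0:ℝ)..x, (1 - q^2 * Real.sin θ ^ 2) ^ (-(1/p))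

/-- Complete p-elliptic integral of the first kind, type 2. -/
def K2 (p q : ℝ) : ℝ := F2 p q (π/2)

open Classical in
/-- Domain of the amplitude parametrization: restricted to `(-π/2, π/2)` when `q = 1` and `p ≤ 2`. -/
def amDom (p q : ℝ) : Set ℝ := if q = 1 ∧ p ≤ 2 then Ioo (-(π/2)) (π/2) else univ

/-- `g` is the inverse of `f`, with `f` regarded as a bijection from `S` onto `ℝ`. -/
def IsInverseOn (f g : ℝ → ℝ) (S : Set ℝ) : Prop :=
  (∀ y ∈ S, g (f y) = y) ∧ ∀ x : ℝ, g x ∈ S ∧ f (g x) = x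

open scoped Topology

/-!
Write `θ = am x`. By the inverse function theorem,
`am' = √(1 - q² sin² θ) / |cos θ| ^ (1 - 2/p)`, so in
`w = |cn_p| ^ (p-2) cn_p = |cos θ| ^ (1 - 2/p) cos θ` the weight cancels on differentiation:
`w' = -(2 - 2/p) sin θ √(1 - q² sin² θ)` and `w'' = -(2 - 2/p) cn_p (1 - 2 q² sin² θ)`.
With these, the Euler–Lagrange equation reduces to `A² = 4α²q²` and `sin² + cos² = 1`.

The chain rule only gives these formulas where `cos θ ≠ 0`. Since `am` is injective, the other
points form a countable set, and as both sides are continuous, the fundamental theorem of calculus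
with a countable exceptional set extends the formulas everywhere. That `am` is continuous and
differentiable rests on the integrand of `F1` being locally integrable on `amDom p q`: near a zero
of `cos` it is dominated by `|θ - θ₀| ^ r` with `r > -1`.
-/

theorem hasDerivAt_of_hasDerivAt_off_countable {E : Type*} [NormedAddCommGroup E]
    [NormedSpace ℝ E] [CompleteSpace E] {f f' : ℝ → E} {s : Set ℝ} (hs : s.Countable)
    (hf : Continuous f) (hf' : Continuous f') (hd : ∀ x ∉ s, HasDerivAt f (f' x) x) (x : ℝ) :
    HasDerivAt f (f' x) x := by
  have hftc : f = fun b => f 0 + ∫ y in (0:ℝ)..b, f' y := by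
    funext b
    rw [integral_eq_of_hasDerivAt_off_countable f f' hs hf.continuousOn
      (fun y hy => hd y hy.2) (hf'.intervalIntegrable 0 b)]
    abel
  rw [hftc]
  exact (hf'.integral_hasStrictDerivAt 0 x).hasDerivAt.const_add _

theorem countable_setOf_cos_eq_zero : {θ : ℝ | cos θ = 0}.Countable :=
  (countable_range fun k : ℤ => (2 * k + 1) * π / 2).mono fun _ hθ =>
    (cos_eq_zero_iff.1 hθ).imp fun _ h => h.symm

theorem abs_cos_eq_abs_sin_sub {x₀ : ℝ} (hc : cos x₀ = 0) (θ : ℝ) :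
    |cos θ| = |sin (θ - x₀)| := by
  have hs : |sin x₀| = 1 := by
    rcases cos_eq_zero_iff_sin_eq.1 hc with h | h <;> simp [h]
  rw [← sub_add_cancel θ x₀, cos_add, hc, add_sub_cancel_right]
  simp [abs_mul, hs]

section SignedPower

theorem abs_abs_rpow_mul_self {t : ℝ} (ht : t + 1 ≠ 0) (x : ℝ) :
    |(|x| ^ t * x)| = |x| ^ (t + 1) := by
  rw [abs_mul, abs_of_nonneg (rpow_nonneg (abs_nonneg x) t), rpow_add_one' (abs_nonneg x) ht]

theorem abs_rpow_mul_self_abs_rpow_mul_self (a b x : ℝ) :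
    |(|x| ^ a * x)| ^ b * (|x| ^ a * x) = |x| ^ ((a + 1) * (b + 1) - 1) * x := by
  rcases eq_or_ne x 0 with rfl | hx
  · simp
  have hx' : 0 < |x| := abs_pos.2 hx
  rw [abs_mul, abs_of_pos (rpow_pos_of_pos hx' a), ← rpow_add_one hx'.ne',
    ← rpow_mul hx'.le, ← mul_assoc, ← rpow_add hx']
  ring_nf

theorem continuous_abs_rpow_mul_self {t : ℝ} (ht : -1 < t) :
    Continuous fun x : ℝ => |x| ^ t * x := by
  refine continuous_iff_continuousAt.2 fun x => ?_
  rcases eq_or_ne x 0 with rfl | hx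
  · have h : Tendsto (fun x : ℝ => |x| ^ (t + 1)) (𝓝 0) (𝓝 0) := by
      simpa [zero_rpow (by linarith : t + 1 ≠ 0)] using
        (continuous_abs.rpow_const fun _ => Or.inr (by linarith : (0:ℝ) ≤ t + 1)).tendsto 0
    simpa [ContinuousAt] using
      squeeze_zero_norm (fun x => (abs_abs_rpow_mul_self (by linarith) x).le) h
  · exact (continuous_abs.continuousAt.rpow_const (Or.inl (abs_ne_zero.2 hx))).mul
      continuousAt_id

theorem hasDerivAt_abs_rpow_mul_self {t x : ℝ} (hx : x ≠ 0) :
    HasDerivAt (fun x : ℝ => |x| ^ t * x) ((t + 1) * |x| ^ t) x := by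
  have hx' : 0 < |x| := abs_pos.2 hx
  refine (((hasDerivAt_abs hx).rpow_const (p := t) (Or.inl hx'.ne')).fun_mul
    (hasDerivAt_id x)).congr_deriv ?_
  have hsign : (SignType.sign x : ℝ) * (|x| ^ (t - 1) * x) = |x| ^ t := by
    rw [mul_left_comm, sign_mul_self, ← rpow_add_one hx'.ne', sub_add_cancel]
  rw [id_eq, mul_one]
  linear_combination t * hsign

variable {p : ℝ}

theorem abs_mul_abs_rpow_mul_self_rpow_sub_two (hp : p ≠ 0) (A c : ℝ) :
    |A * (|c| ^ (2/p - 1) * c)| ^ (p - 2) * (A * (|c| ^ (2/p - 1) * c))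
      = |A| ^ (p - 2) * A * (|c| ^ (1 - 2/p) * c) := by
  have hexp : (2/p - 1 + 1) * (p - 2 + 1) - 1 = 1 - 2/p := by field_simp; ring
  rw [abs_mul, mul_rpow (abs_nonneg _) (abs_nonneg _), ← hexp,
    ← abs_rpow_mul_self_abs_rpow_mul_self]
  ring

theorem abs_mul_abs_rpow_mul_self_rpow (hp : p ≠ 0) (A c : ℝ) :
    |A * (|c| ^ (2/p - 1) * c)| ^ p = |A| ^ (p - 2) * A ^ 2 * c ^ 2 := by
  have hexp : (2/p - 1 + 1) * p = 2 := by field_simp; ring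
  have hA : |A| ^ p = |A| ^ (p - 2) * A ^ 2 := by
    rw [← sq_abs, ← rpow_two, ← rpow_add' (abs_nonneg _) (by simpa using hp), sub_add_cancel]
  rw [abs_mul, abs_abs_rpow_mul_self (by simpa using hp) c, mul_rpow (abs_nonneg _)
    (rpow_nonneg (abs_nonneg _) _), ← rpow_mul (abs_nonneg _), hexp, rpow_two, sq_abs, hA]

end SignedPower

theorem locallyIntegrable_abs_rpow {r : ℝ} (hr : -1 < r) :
    LocallyIntegrable (fun u : ℝ => |u| ^ r) :=
  locallyIntegrable_of_norm_le_rpow (C := 1) (α := -r) (by simp) (by simpa using neg_lt.1 hr)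
    (ae_of_all _ fun u => by simp [abs_of_nonneg (rpow_nonneg (abs_nonneg u) r)])
    (by fun_prop : Measurable fun u : ℝ => |u| ^ r).aestronglyMeasurable

theorem locallyIntegrable_abs_cos_rpow {r : ℝ} (hr : -1 < r) :
    LocallyIntegrable (fun θ => |cos θ| ^ r) := by
  rcases le_or_gt 0 r with hr0 | hr0
  · exact (continuous_cos.abs.rpow_const fun _ => Or.inr hr0).locallyIntegrable
  have hmeas : Measurable fun θ => |cos θ| ^ r := by fun_prop
  intro x₀
  by_cases hc : cos x₀ = 0
  · set I := Ioo (x₀ - π/2) (x₀ + π/2)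
    have hdom : IntegrableOn (fun θ => (2/π) ^ r * |θ - x₀| ^ r) I := by
      have h := (((locallyIntegrable_abs_rpow hr).integrableOn_isCompact isCompact_uIcc
        ).intervalIntegrable (a := -(π/2)) (b := π/2)).comp_sub_right x₀
      rw [intervalIntegrable_iff_integrableOn_Ioo_of_le (by linarith [pi_pos])] at h
      simp only [← sub_eq_add_neg, add_comm] at h
      exact h.const_mul _
    refine ⟨I, Ioo_mem_nhds (by linarith [pi_pos]) (by linarith [pi_pos]),
      hdom.mono' hmeas.aestronglyMeasurable
        (ae_restrict_of_forall_mem measurableSet_Ioo fun θ hθ => ?_)⟩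
    rw [norm_of_nonneg (rpow_nonneg (abs_nonneg _) r), abs_cos_eq_abs_sin_sub hc,
      ← mul_rpow (by positivity) (abs_nonneg _)]
    rcases eq_or_ne θ x₀ with rfl | hne
    · simp [zero_rpow hr0.ne]
    · refine rpow_le_rpow_of_nonpos (by positivity) (mul_abs_le_abs_sin ?_) hr0.le
      rw [abs_le]
      constructor <;> linarith [hθ.1, hθ.2]
  · exact (volume.finiteAt_nhds x₀).integrableAtFilter_of_tendsto
      hmeas.stronglyMeasurable.stronglyMeasurableAtFilter
      (continuous_cos.abs.continuousAt.rpow_const (Or.inl (abs_ne_zero.2 hc)))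

def F1Integrand (p q θ : ℝ) : ℝ := |cos θ| ^ (1 - 2/p) / √(1 - q^2 * sin θ ^ 2)

section F1

variable {p q θ : ℝ}

theorem one_sub_sq_mul_sin_sq_pos (hq : q ^ 2 ≤ 1) (hc : cos θ ≠ 0) :
    0 < 1 - q ^ 2 * sin θ ^ 2 := by
  have hcos : 0 < cos θ ^ 2 := by positivity
  nlinarith [sin_sq_add_cos_sq θ, mul_nonneg (sub_nonneg.2 hq) (sq_nonneg (sin θ))]

theorem F1Integrand_nonneg (p q θ : ℝ) : 0 ≤ F1Integrand p q θ := by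
  unfold F1Integrand
  positivity

theorem F1Integrand_pos (hq : q ^ 2 ≤ 1) (hc : cos θ ≠ 0) : 0 < F1Integrand p q θ :=
  div_pos (rpow_pos_of_pos (abs_pos.2 hc) _) (sqrt_pos.2 (one_sub_sq_mul_sin_sq_pos hq hc))

theorem measurable_F1Integrand : Measurable (F1Integrand p q) := by
  unfold F1Integrand
  fun_prop

theorem continuousAt_F1Integrand (hq : q ^ 2 ≤ 1) (hc : cos θ ≠ 0) :
    ContinuousAt (F1Integrand p q) θ :=
  (continuous_cos.abs.continuousAt.rpow_const (Or.inl (abs_ne_zero.2 hc))).div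
    (by fun_prop) (sqrt_pos.2 (one_sub_sq_mul_sin_sq_pos hq hc)).ne'

theorem locallyIntegrable_F1Integrand (hp : 1 < p) (hq : q ∈ Icc (0:ℝ) 1)
    (h : ¬(q = 1 ∧ p ≤ 2)) : LocallyIntegrable (F1Integrand p q) := by
  rcases hq.2.lt_or_eq with hq1 | rfl
  · have hq' : 0 < 1 - q ^ 2 := by nlinarith [hq.1]
    have hr : -1 < 1 - 2/p := by
      have : 2 / p < 2 := by rw [div_lt_iff₀ (by linarith)]; linarith
      linarith
    refine ((locallyIntegrable_abs_cos_rpow hr).smul (√(1 - q ^ 2))⁻¹).mono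
      measurable_F1Integrand.aestronglyMeasurable (ae_of_all _ fun θ => ?_)
    rw [norm_of_nonneg (F1Integrand_nonneg _ _ θ), Pi.smul_apply, smul_eq_mul,
      norm_of_nonneg (by positivity), F1Integrand, div_eq_inv_mul]
    gcongr
    nlinarith [sin_sq_le_one θ]
  · have hr : -1 < -(2/p) := by
      have : 2 / p < 1 := by rw [div_lt_one (by linarith)]; linarith [show 2 < p by simpa using h]
      linarith
    refine (locallyIntegrable_abs_cos_rpow hr).mono
      measurable_F1Integrand.aestronglyMeasurable (ae_of_all _ fun θ => ?_)
    rw [norm_of_nonneg (F1Integrand_nonneg _ _ θ), norm_of_nonneg (by positivity), F1Integrand,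
      one_pow, one_mul, ← cos_sq', sqrt_sq_eq_abs]
    rcases eq_or_ne (cos θ) 0 with hc | hc
    · simp [hc, rpow_nonneg]
    · rw [div_le_iff₀ (abs_pos.2 hc), ← rpow_add_one (abs_ne_zero.2 hc), neg_add_eq_sub]

theorem isOpen_amDom : IsOpen (amDom p q) := by
  unfold amDom
  split_ifs
  exacts [isOpen_Ioo, isOpen_univ]

theorem ordConnected_amDom : (amDom p q).OrdConnected := by
  unfold amDom
  split_ifs
  exacts [ordConnected_Ioo, ordConnected_univ]

theorem zero_mem_amDom : (0:ℝ) ∈ amDom p q := by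
  unfold amDom
  split_ifs
  exacts [⟨by linarith [pi_pos], by linarith [pi_pos]⟩, trivial]

theorem cos_pos_of_mem_amDom (h : q = 1 ∧ p ≤ 2) (hθ : θ ∈ amDom p q) : 0 < cos θ := by
  rw [amDom, if_pos h] at hθ
  exact cos_pos_of_mem_Ioo hθ

theorem intervalIntegrable_F1Integrand (hp : 1 < p) (hq : q ∈ Icc (0:ℝ) 1) {a b : ℝ}
    (ha : a ∈ amDom p q) (hb : b ∈ amDom p q) :
    IntervalIntegrable (F1Integrand p q) volume a b := by
  by_cases h : q = 1 ∧ p ≤ 2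
  · exact ContinuousOn.intervalIntegrable fun θ hθ =>
      (continuousAt_F1Integrand (pow_le_one₀ hq.1 hq.2) (cos_pos_of_mem_amDom h
        (ordConnected_amDom.uIcc_subset ha hb hθ)).ne').continuousWithinAt
  · exact ((locallyIntegrable_F1Integrand hp hq h).integrableOn_isCompact
      isCompact_uIcc).intervalIntegrable

theorem monotoneOn_F1 (hp : 1 < p) (hq : q ∈ Icc (0:ℝ) 1) :
    MonotoneOn (F1 p q) (amDom p q) := by
  intro u hu v hv huv
  have hsub : F1 p q v - F1 p q u = ∫ θ in u..v, F1Integrand p q θ :=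
    integral_interval_sub_left (intervalIntegrable_F1Integrand hp hq zero_mem_amDom hv)
      (intervalIntegrable_F1Integrand hp hq zero_mem_amDom hu)
  have hnonneg : 0 ≤ ∫ θ in u..v, F1Integrand p q θ :=
    intervalIntegral.integral_nonneg huv fun θ _ => F1Integrand_nonneg p q θ
  linarith

theorem hasDerivAt_F1 (hp : 1 < p) (hq : q ∈ Icc (0:ℝ) 1) (hθ : θ ∈ amDom p q)
    (hc : cos θ ≠ 0) : HasDerivAt (F1 p q) (F1Integrand p q θ) θ :=
  integral_hasDerivAt_right (intervalIntegrable_F1Integrand hp hq zero_mem_amDom hθ)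
    measurable_F1Integrand.stronglyMeasurable.stronglyMeasurableAtFilter
    (continuousAt_F1Integrand (pow_le_one₀ hq.1 hq.2) hc)

end F1

namespace IsInverseOn

variable {f g : ℝ → ℝ} {S : Set ℝ}

theorem injective (h : IsInverseOn f g S) : Function.Injective g := fun x y hxy => by
  rw [← (h.2 x).2, hxy, (h.2 y).2]

theorem monotone (h : IsInverseOn f g S) (hf : MonotoneOn f S) : Monotone g := by
  intro x y hxy
  by_contra! hlt
  have hyx := hf (h.2 y).1 (h.2 x).1 hlt.le
  rw [(h.2 x).2, (h.2 y).2] at hyx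
  exact hlt.ne (congrArg g (le_antisymm hxy hyx)).symm

theorem continuous (h : IsInverseOn f g S) (hf : MonotoneOn f S) (hS : IsOpen S) :
    Continuous g :=
  continuous_iff_continuousAt.2 fun x =>
    continuousAt_of_monotoneOn_of_image_mem_nhds ((h.monotone hf).monotoneOn univ) univ_mem
      (mem_of_superset (hS.mem_nhds (h.2 x).1) fun y hy => ⟨f y, trivial, h.1 y hy⟩)

theorem hasDerivAt (h : IsInverseOn f g S) {x f' : ℝ} (hg : ContinuousAt g x)
    (hf : HasDerivAt f f' (g x)) (hf' : f' ≠ 0) : HasDerivAt g f'⁻¹ x :=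
  hf.of_local_left_inverse hg hf' (Eventually.of_forall fun y => (h.2 y).2)

end IsInverseOn

section Amplitude

variable {p q : ℝ} {am : ℝ → ℝ}

theorem continuous_am (hp : 1 < p) (hq : q ∈ Icc (0:ℝ) 1)
    (ham : IsInverseOn (F1 p q) am (amDom p q)) : Continuous am :=
  ham.continuous (monotoneOn_F1 hp hq) isOpen_amDom

theorem hasDerivAt_am (hp : 1 < p) (hq : q ∈ Icc (0:ℝ) 1)
    (ham : IsInverseOn (F1 p q) am (amDom p q)) {x : ℝ} (hc : cos (am x) ≠ 0) :
    HasDerivAt am (F1Integrand p q (am x))⁻¹ x :=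
  ham.hasDerivAt (continuous_am hp hq ham).continuousAt (hasDerivAt_F1 hp hq (ham.2 x).1 hc)
    (F1Integrand_pos (pow_le_one₀ hq.1 hq.2) hc).ne'

theorem countable_setOf_cos_am_eq_zero (ham : IsInverseOn (F1 p q) am (amDom p q)) :
    {x | cos (am x) = 0}.Countable :=
  countable_setOf_cos_eq_zero.preimage ham.injective

theorem hasDerivAt_abs_cos_am_rpow_mul_cos_am (hp : 1 < p) (hq : q ∈ Icc (0:ℝ) 1)
    (ham : IsInverseOn (F1 p q) am (amDom p q)) (x : ℝ) :
    HasDerivAt (fun x => |cos (am x)| ^ (1 - 2/p) * cos (am x))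
      (-(2 - 2/p) * (sin (am x) * √(1 - q^2 * sin (am x) ^ 2))) x := by
  have ht : -1 < 1 - 2/p := by
    have : 2 / p < 2 := by rw [div_lt_iff₀ (by linarith)]; linarith
    linarith
  have ham_cont := continuous_am hp hq ham
  have hderiv_cont :
      Continuous fun x => -(2 - 2/p) * (sin (am x) * √(1 - q^2 * sin (am x) ^ 2)) := by
    fun_prop
  refine hasDerivAt_of_hasDerivAt_off_countable (countable_setOf_cos_am_eq_zero ham)
    ((continuous_abs_rpow_mul_self ht).comp (continuous_cos.comp ham_cont)) hderiv_cont
    (fun x (hc : cos (am x) ≠ 0) => ?_) x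
  have hD := one_sub_sq_mul_sin_sq_pos (pow_le_one₀ hq.1 hq.2) hc
  refine (((hasDerivAt_abs_rpow_mul_self hc).comp _ (hasDerivAt_cos _)).comp x
    (hasDerivAt_am hp hq ham hc)).congr_deriv ?_
  have h1 : |cos (am x)| ^ (1 - 2/p) ≠ 0 := (rpow_pos_of_pos (abs_pos.2 hc) _).ne'
  have h2 : √(1 - q^2 * sin (am x) ^ 2) ≠ 0 := (sqrt_pos.2 hD).ne'
  rw [F1Integrand]
  field_simp
  ring

theorem hasDerivAt_sin_am_mul_sqrt (hp : 1 < p) (hq : q ∈ Icc (0:ℝ) 1)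
    (ham : IsInverseOn (F1 p q) am (amDom p q)) (x : ℝ) :
    HasDerivAt (fun x => sin (am x) * √(1 - q^2 * sin (am x) ^ 2))
      (|cos (am x)| ^ (2/p - 1) * cos (am x) * (1 - 2 * q^2 * sin (am x) ^ 2)) x := by
  have ht : -1 < 2/p - 1 := by
    have : 0 < 2 / p := by positivity
    linarith
  have ham_cont := continuous_am hp hq ham
  have hfun_cont : Continuous fun x => sin (am x) * √(1 - q^2 * sin (am x) ^ 2) := by fun_prop
  have hderiv_cont : Continuous fun x =>
      |cos (am x)| ^ (2/p - 1) * cos (am x) * (1 - 2 * q^2 * sin (am x) ^ 2) :=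
    ((continuous_abs_rpow_mul_self ht).comp (continuous_cos.comp ham_cont)).mul (by fun_prop)
  refine hasDerivAt_of_hasDerivAt_off_countable (countable_setOf_cos_am_eq_zero ham)
    hfun_cont hderiv_cont (fun x (hc : cos (am x) ≠ 0) => ?_) x
  have hD := one_sub_sq_mul_sin_sq_pos (pow_le_one₀ hq.1 hq.2) hc
  have hsin := (hasDerivAt_sin _).comp x (hasDerivAt_am hp hq ham hc)
  have hsqrt := (((hsin.pow 2).const_mul (q^2)).const_sub 1).sqrt hD.ne'
  refine (hsin.mul hsqrt).congr_deriv ?_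
  have h1 : |cos (am x)| ^ (1 - 2/p) ≠ 0 := (rpow_pos_of_pos (abs_pos.2 hc) _).ne'
  have h2 : √(1 - q^2 * sin (am x) ^ 2) ≠ 0 := (sqrt_pos.2 hD).ne'
  simp only [F1Integrand, Function.comp_apply, Pi.pow_apply]
  rw [← neg_sub, rpow_neg (abs_nonneg _)]
  field_simp
  norm_num
  linear_combination 2 * sq_sqrt hD.le

end Amplitude

theorem cnp_solves_EL_general (p q A α β lam : ℝ) (hp : 1 < p) (hq : q ∈ Set.Icc (0:ℝ) 1)
    (am : ℝ → ℝ) (ham : IsInverseOn (F1 p q) am (amDom p q))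
    (hA : A^2 = 4 * α^2 * q^2)
    (hlam : lam = 2 * (p-1) * |A| ^ (p-2) * α^2 * (2*q^2 - 1))
    (k : ℝ → ℝ)
    (hk : ∀ s, k s = A * (|Real.cos (am (α*s + β))| ^ (2/p - 1) * Real.cos (am (α*s + β)))) :
    ∀ s : ℝ,
      p * deriv (deriv (fun t => |k t| ^ (p-2) * k t)) s
        + (p-1) * |k s| ^ p * k s - lam * k s = 0 := by
  have hp0 : p ≠ 0 := by positivity
  have haff (t : ℝ) : HasDerivAt (fun t => α * t + β) α t := by
    simpa using ((hasDerivAt_id t).const_mul α).add_const β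
  have hd1 : deriv (fun t => |k t| ^ (p-2) * k t) = fun t => |A| ^ (p - 2) * A *
      (-(2 - 2/p) * (sin (am (α*t + β)) * √(1 - q^2 * sin (am (α*t + β)) ^ 2)) * α) := by
    funext t
    simp only [hk, abs_mul_abs_rpow_mul_self_rpow_sub_two hp0]
    exact (((hasDerivAt_abs_cos_am_rpow_mul_cos_am hp hq ham _).comp t (haff t)).const_mul
      _).deriv
  intro s
  have hd2 : deriv (deriv (fun t => |k t| ^ (p-2) * k t)) s = |A| ^ (p - 2) * A *
      (-(2 - 2/p) * (|cos (am (α*s + β))| ^ (2/p - 1) * cos (am (α*s + β)) *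
        (1 - 2 * q^2 * sin (am (α*s + β)) ^ 2) * α) * α) := by
    rw [hd1]
    exact (((((hasDerivAt_sin_am_mul_sqrt hp hq ham _).comp s (haff s)).const_mul _).mul_const
      _).const_mul _).deriv
  rw [hd2, hk s, hlam, abs_mul_abs_rpow_mul_self_rpow hp0]
  set c := cos (am (α*s + β))
  set u := |A| ^ (p - 2) * A * (|c| ^ (2/p - 1) * c)
  have hp2 : p * (2 - 2/p) = 2 * (p - 1) := by field_simp
  linear_combination -(u * α^2 * (1 - 2 * q^2 * sin (am (α*s + β)) ^ 2)) * hp2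
    + (p - 1) * u * c^2 * hA + 4 * (p - 1) * u * α^2 * q^2 * sin_sq_add_cos_sq (am (α*s + β))

/-- If `A² = 4α²q²` and `λ = 2(p-1)|A|^{p-2}α²(2q²-1)`, then `k(s) = A·cn_p(αs+β,q)`
solves `p(|k|^{p-2}k)'' + (p-1)|k|^p k - λ k = 0` pointwise. -/
theorem cnp_solves_EL (p q A α β lam : ℝ) (hp : 1 < p) (hq : q ∈ Set.Icc (0:ℝ) 1)
    (hα : 0 ≤ α)
    (am : ℝ → ℝ) (ham : IsInverseOn (F1 p q) am (amDom p q))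
    (hA : A^2 = 4 * α^2 * q^2)
    (hlam : lam = 2 * (p-1) * |A| ^ (p-2) * α^2 * (2*q^2 - 1))
    (k : ℝ → ℝ)
    (hk : ∀ s, k s = A * (|Real.cos (am (α*s + β))| ^ (2/p - 1) * Real.cos (am (α*s + β)))) :
    ∀ s : ℝ,
      p * deriv (deriv (fun t => |k t| ^ (p-2) * k t)) s
        + (p-1) * |k s| ^ p * k s - lam * k s = 0 :=
  cnp_solves_EL_general p q A α β lam hp hq am ham hA hlam k hk
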